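/- arXiv:2112.14627 — 5 statements merged into one kernel-verified Lean document; each statement's English description precedes it below -/
import Mathlib

section
/- For real numbers $a, b$ and $1 < p < 2$, there exists a constant $C_p > 0$ depending only on $p$ such that $|a-b|^p \le C_p\,\big[(|a|^{p-2}a - |b|^{p-2}b)(a-b)\big]^{p/2}\,(|a|^p + |b|^p)^{(2-p)/2}$. -/
/-!
Write `φ(x) = |x| ^ (p - 2) * x` and `M = max |a| |b|`. The core estimate is
`(φ a - φ b) * (a - b) ≥ (p - 1) / 2 * (a - b) ^ 2 * M ^ (p - 2)`. By symmetry one may take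
`0 < a = M`; for `b ≥ 0` it is the tangent-line inequality of the concave `t ↦ t ^ (p - 1)` at `a`,
and for `b < 0` one has `φ a - φ b ≥ a ^ (p - 1) ≥ (a - b) * a ^ (p - 2) / 2`. Raising it to the
power `p / 2` and multiplying by `(|a| ^ p + |b| ^ p) ^ ((2 - p) / 2) ≥ M ^ (p * (2 - p) / 2)`
makes the powers of `M` cancel.
-/

open Real

theorem rpow_le_tangent_line {q a b : ℝ} (hq0 : 0 ≤ q) (hq1 : q ≤ 1) (ha : 0 < a) (hb : 0 ≤ b) :
    b ^ q ≤ a ^ q + q * a ^ (q - 1) * (b - a) := by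
  have hbern : (b / a) ^ q ≤ 1 + q * (b / a - 1) := by
    simpa using rpow_one_add_le_one_add_mul_self (s := b / a - 1)
      (by linarith [div_nonneg hb ha.le]) hq0 hq1
  rw [div_rpow hb ha.le, div_le_iff₀ (rpow_pos_of_pos ha q)] at hbern
  calc b ^ q ≤ (1 + q * (b / a - 1)) * a ^ q := hbern
    _ = a ^ q + q * a ^ (q - 1) * (b - a) := by
      rw [rpow_sub_one ha.ne']
      field_simp

noncomputable def signedRpow (p x : ℝ) : ℝ := |x| ^ (p - 2) * x

theorem signedRpow_of_nonneg {p x : ℝ} (hp : p ≠ 1) (hx : 0 ≤ x) :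
    signedRpow p x = x ^ (p - 1) := by
  rw [signedRpow, abs_of_nonneg hx, ← rpow_add_one' hx (by contrapose! hp; linarith)]
  ring_nf

theorem signedRpow_nonpos {p x : ℝ} (hx : x ≤ 0) : signedRpow p x ≤ 0 :=
  mul_nonpos_of_nonneg_of_nonpos (rpow_nonneg (abs_nonneg x) _) hx

theorem signedRpow_neg (p x : ℝ) : signedRpow p (-x) = -signedRpow p x := by
  simp [signedRpow]

theorem signedRpow_sub_ge_of_abs_le {p a b : ℝ} (hp1 : 1 < p) (hp2 : p ≤ 2) (ha : 0 < a)
    (hba : |b| ≤ a) :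
    (p - 1) / 2 * (a - b) * a ^ (p - 2) ≤ signedRpow p a - signedRpow p b := by
  have hab : 0 ≤ a - b := by linarith [le_abs_self b]
  have hpow : 0 ≤ a ^ (p - 2) := rpow_nonneg ha.le _
  rcases le_or_gt 0 b with hb | hb
  · have htangent := rpow_le_tangent_line (q := p - 1) (by linarith) (by linarith) ha hb
    rw [show p - 1 - 1 = p - 2 by ring] at htangent
    rw [signedRpow_of_nonneg hp1.ne' ha.le, signedRpow_of_nonneg hp1.ne' hb]
    nlinarith [mul_nonneg (mul_nonneg (by linarith : (0:ℝ) ≤ p - 1) hab) hpow]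
  · have hlin : (p - 1) / 2 * (a - b) ≤ a := by nlinarith [neg_abs_le b]
    have hsa : signedRpow p a = a ^ (p - 2) * a := by rw [signedRpow, abs_of_pos ha]
    nlinarith [mul_le_mul_of_nonneg_right hlin hpow, signedRpow_nonpos (p := p) hb.le]

theorem signedRpow_sub_mul_sub_ge (p a b : ℝ) (hp1 : 1 < p) (hp2 : p ≤ 2) :
    (p - 1) / 2 * (a - b) ^ 2 * max |a| |b| ^ (p - 2) ≤
      (signedRpow p a - signedRpow p b) * (a - b) := by
  wlog hba : |b| ≤ |a| generalizing a b
  · have := this b a (le_of_not_ge hba)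
    rw [max_comm]
    linarith
  wlog ha : 0 ≤ a generalizing a b
  · have := this (-a) (-b) (by simpa using hba) (by linarith)
    simp only [abs_neg, signedRpow_neg] at this
    linarith
  rw [max_eq_left hba]
  rw [abs_of_nonneg ha] at hba ⊢
  rcases ha.eq_or_lt with rfl | ha
  · obtain rfl : b = 0 := abs_nonpos_iff.mp hba
    simp
  · have key := signedRpow_sub_ge_of_abs_le hp1 hp2 ha hba
    nlinarith [mul_le_mul_of_nonneg_right key (show 0 ≤ a - b by linarith [le_abs_self b])]

theorem rpow_le_rpow_mul_rpow_of_le {p c x M D S : ℝ} (hp0 : 0 ≤ p) (hp2 : p ≤ 2) (hc : 0 ≤ c)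
    (hM : 0 < M) (hD : c * x ^ 2 * M ^ (p - 2) ≤ D) (hS : M ^ p ≤ S) :
    c ^ (p / 2) * |x| ^ p ≤ D ^ (p / 2) * S ^ ((2 - p) / 2) := by
  have hcancel : M ^ ((p - 2) * (p / 2)) * M ^ (p * ((2 - p) / 2)) = 1 := by
    rw [← rpow_add hM, show (p - 2) * (p / 2) + p * ((2 - p) / 2) = 0 by ring, rpow_zero]
  have hD0 : 0 ≤ D := le_trans (by positivity) hD
  calc c ^ (p / 2) * |x| ^ p
      = (c * x ^ 2 * M ^ (p - 2)) ^ (p / 2) * (M ^ p) ^ ((2 - p) / 2) := by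
        rw [mul_rpow (by positivity) (by positivity), mul_rpow hc (by positivity), ← sq_abs,
          ← rpow_natCast, ← rpow_mul (abs_nonneg x), ← rpow_mul hM.le, ← rpow_mul hM.le]
        push_cast
        rw [show (2 : ℝ) * (p / 2) = p by ring]
        linear_combination -(c ^ (p / 2) * |x| ^ p) * hcancel
    _ ≤ D ^ (p / 2) * S ^ ((2 - p) / 2) := by gcongr

theorem simon_inequality_p_lt_two (p : ℝ) (hp1 : 1 < p) (hp2 : p < 2) :
    ∃ C : ℝ, 0 < C ∧ ∀ a b : ℝ,
      |a - b| ^ p ≤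
        C * ((|a| ^ (p - 2) * a - |b| ^ (p - 2) * b) * (a - b)) ^ (p / 2) *
          (|a| ^ p + |b| ^ p) ^ ((2 - p) / 2) := by
  have hc : 0 < (p - 1) / 2 := by linarith
  refine ⟨(((p - 1) / 2) ^ (p / 2))⁻¹, by positivity, fun a b => ?_⟩
  rcases (abs_nonneg a |>.trans (le_max_left |a| |b|)).eq_or_lt with hM | hM
  · obtain ⟨rfl, rfl⟩ : a = 0 ∧ b = 0 := by simpa using max_le_iff.mp hM.ge
    simp only [sub_self, abs_zero, zero_rpow (by linarith : p ≠ 0)]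
    positivity
  · have hS : max |a| |b| ^ p ≤ |a| ^ p + |b| ^ p := by
      rw [rpow_max (abs_nonneg a) (abs_nonneg b) (by linarith)]
      exact max_le_add_of_nonneg (by positivity) (by positivity)
    rw [mul_assoc, le_inv_mul_iff₀ (by positivity)]
    exact rpow_le_rpow_mul_rpow_of_le (by linarith) hp2.le hc.le hM
      (signedRpow_sub_mul_sub_ge p a b hp1 hp2.le) hS
end

section
/- Let $a, b, S > 0$, $\theta > 1$, $1 < p$, and $p^* > \theta p$ be real numbers. Define $H(t) = \frac{a}{p}S t^p + \frac{b}{\theta p}S^\theta t^{\theta p} - \frac{1}{p^*}t^{p^*}$ for $t \ge 0$. Then there exists a unique $\hat{T} > 0$ such that $H(\hat{T}) = \sup_{t \ge 0} H(t)$. -/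
/-!
With `A = a S`, `C = b S^θ`, `q = θ p` and `r = p*`, the function is
`H t = A/p t^p + C/q t^q - 1/r t^r`, and for `t > 0` its derivative factors as
`H' t = t^(q-1) φ t` with `φ t = A t^(p-q) + C - t^(r-q)`. Since `p < q < r`, `φ` is strictly
decreasing on `(0, ∞)`, positive near `0` and negative for large `t`, so it has a unique zero `T`.
Hence `H` strictly increases on `[0, T]` and strictly decreases on `[T, ∞)`, and `T` is its only
maximum point.
-/

open Real Set

theorem existsUnique_pos_isMaxOn_Ici_of_strictMonoOn_of_strictAntiOn {f : ℝ → ℝ} {T : ℝ}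
    (hT : 0 < T) (hmono : StrictMonoOn f (Icc 0 T)) (hanti : StrictAntiOn f (Ici T)) :
    ∃! T : ℝ, 0 < T ∧ IsMaxOn f (Ici 0) T := by
  have hmax : IsMaxOn f (Ici 0) T := fun x (hx : 0 ≤ x) => by
    rcases le_total x T with hxT | hTx
    · exact hmono.monotoneOn ⟨hx, hxT⟩ ⟨hT.le, le_rfl⟩ hxT
    · exact hanti.antitoneOn self_mem_Ici hTx hTx
  refine ⟨T, ⟨hT, hmax⟩, fun T' ⟨hT', hmax'⟩ => ?_⟩
  have heq : f T' = f T := le_antisymm (hmax hT'.le) (hmax' hT.le)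
  rcases le_total T' T with hT'T | hTT'
  · exact hmono.injOn ⟨hT'.le, hT'T⟩ ⟨hT.le, le_rfl⟩ heq
  · exact hanti.injOn hTT' self_mem_Ici heq

theorem existsUnique_pos_isMaxOn_Ici_of_hasDerivAt {f f' : ℝ → ℝ} {T : ℝ} (hT : 0 < T)
    (hf : ContinuousOn f (Ici 0)) (hderiv : ∀ t, 0 < t → HasDerivAt f (f' t) t)
    (hpos : ∀ t ∈ Ioo 0 T, 0 < f' t) (hneg : ∀ t, T < t → f' t < 0) :
    ∃! T : ℝ, 0 < T ∧ IsMaxOn f (Ici 0) T := by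
  refine existsUnique_pos_isMaxOn_Ici_of_strictMonoOn_of_strictAntiOn hT ?_ ?_
  · refine strictMonoOn_of_hasDerivWithinAt_pos (f' := f') (convex_Icc 0 T)
      (hf.mono Icc_subset_Ici_self) (fun t ht => ?_) (fun t ht => ?_)
    all_goals rw [interior_Icc] at ht
    exacts [(hderiv t ht.1).hasDerivWithinAt, hpos t ht]
  · refine strictAntiOn_of_hasDerivWithinAt_neg (f' := f') (convex_Ici T)
      (hf.mono (Ici_subset_Ici.mpr hT.le)) (fun t ht => ?_) (fun t ht => ?_)
    all_goals rw [interior_Ici] at ht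
    exacts [(hderiv t (hT.trans ht)).hasDerivWithinAt, hneg t ht]

noncomputable def fiberingMap (A C p q r t : ℝ) : ℝ :=
  A / p * t ^ p + C / q * t ^ q - 1 / r * t ^ r

noncomputable def fiberingSlope (A C p q r t : ℝ) : ℝ := A * t ^ (p - q) + C - t ^ (r - q)

section

variable {A C p q r : ℝ}

theorem continuousOn_fiberingSlope : ContinuousOn (fiberingSlope A C p q r) (Ioi 0) := by
  unfold fiberingSlope
  fun_prop (disch := exact fun t (ht : 0 < t) => ht.ne')

theorem fiberingSlope_strictAntiOn (hA : 0 ≤ A) (hpq : p < q) (hqr : q < r) :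
    StrictAntiOn (fiberingSlope A C p q r) (Ioi 0) := fun x (hx : 0 < x) y _ hxy => by
  have hpow_le : y ^ (p - q) ≤ x ^ (p - q) := rpow_le_rpow_of_nonpos hx hxy.le (by linarith)
  have hpow_lt : x ^ (r - q) < y ^ (r - q) := rpow_lt_rpow hx.le hxy (by linarith)
  unfold fiberingSlope
  linarith [mul_le_mul_of_nonneg_left hpow_le hA]

theorem exists_fiberingSlope_pos (hA : 0 ≤ A) (hC : 0 < C) (hqr : q < r) :
    ∃ t, 0 < t ∧ 0 < fiberingSlope A C p q r t := by
  set t := (C / 2) ^ (r - q)⁻¹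
  have ht : 0 < t := by positivity
  have hpow : t ^ (r - q) = C / 2 := rpow_inv_rpow (by positivity) (by linarith)
  refine ⟨t, ht, ?_⟩
  unfold fiberingSlope
  linarith [mul_nonneg hA (rpow_pos_of_pos ht (p - q)).le]

theorem exists_fiberingSlope_neg (hA : 0 ≤ A) (hC : 0 ≤ C) (hpq : p < q) (hqr : q < r) :
    ∃ t, 0 < t ∧ fiberingSlope A C p q r t < 0 := by
  set t := (A + C + 1) ^ (r - q)⁻¹
  have ht : 1 ≤ t := one_le_rpow (by linarith) (inv_nonneg.mpr (by linarith))
  have hpow : t ^ (r - q) = A + C + 1 := rpow_inv_rpow (by positivity) (by linarith)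
  have hpow_le : t ^ (p - q) ≤ 1 := rpow_le_one_of_one_le_of_nonpos ht (by linarith)
  refine ⟨t, by linarith, ?_⟩
  unfold fiberingSlope
  linarith [mul_le_mul_of_nonneg_left hpow_le hA]

theorem continuous_fiberingMap (hp : 0 ≤ p) (hq : 0 ≤ q) (hr : 0 ≤ r) :
    Continuous (fiberingMap A C p q r) := by
  unfold fiberingMap
  fun_prop (disch := assumption)

theorem hasDerivAt_fiberingMap (hp : p ≠ 0) (hq : q ≠ 0) (hr : r ≠ 0) {t : ℝ} (ht : 0 < t) :
    HasDerivAt (fiberingMap A C p q r) (t ^ (q - 1) * fiberingSlope A C p q r t) t := by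
  have hderiv := (((hasDerivAt_rpow_const (p := p) (Or.inl ht.ne')).const_mul (A / p)).add
    ((hasDerivAt_rpow_const (p := q) (Or.inl ht.ne')).const_mul (C / q))).sub
    ((hasDerivAt_rpow_const (p := r) (Or.inl ht.ne')).const_mul (1 / r))
  refine HasDerivAt.congr_deriv (f := fiberingMap A C p q r) hderiv ?_
  have hp' : t ^ (q - 1) * t ^ (p - q) = t ^ (p - 1) := by rw [← rpow_add ht]; ring_nf
  have hr' : t ^ (q - 1) * t ^ (r - q) = t ^ (r - 1) := by rw [← rpow_add ht]; ring_nf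
  unfold fiberingSlope
  field_simp
  linear_combination hr' - A * hp'

theorem existsUnique_pos_isMaxOn_fiberingMap (hA : 0 ≤ A) (hC : 0 < C) (hp : 0 < p)
    (hpq : p < q) (hqr : q < r) :
    ∃! T : ℝ, 0 < T ∧ IsMaxOn (fiberingMap A C p q r) (Ici 0) T := by
  have hq : 0 < q := hp.trans hpq
  have hr : 0 < r := hq.trans hqr
  have hanti := fiberingSlope_strictAntiOn (C := C) hA hpq hqr
  obtain ⟨t₀, ht₀, hpos⟩ := exists_fiberingSlope_pos (p := p) hA hC hqr
  obtain ⟨t₁, ht₁, hneg⟩ := exists_fiberingSlope_neg hA hC.le hpq hqr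
  obtain ⟨T, hT, hroot⟩ := isPreconnected_Ioi.intermediate_value ht₁ ht₀
    (continuousOn_fiberingSlope (A := A) (C := C) (p := p) (q := q) (r := r)) ⟨hneg.le, hpos.le⟩
  refine existsUnique_pos_isMaxOn_Ici_of_hasDerivAt hT
    (continuous_fiberingMap hp.le hq.le hr.le).continuousOn
    (fun t ht => hasDerivAt_fiberingMap hp.ne' hq.ne' hr.ne' ht) (fun t ht => ?_) (fun t ht => ?_)
  · have := hanti ht.1 hT ht.2
    exact mul_pos (rpow_pos_of_pos ht.1 _) (hroot ▸ this)
  · have := hanti hT (hT.trans ht) ht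
    exact mul_neg_of_pos_of_neg (rpow_pos_of_pos (hT.trans ht) _) (hroot ▸ this)

end

theorem unique_max_of_fibering_map (a b S θ p pst : ℝ)
    (ha : 0 < a) (hb : 0 < b) (hS : 0 < S) (hθ : 1 < θ) (hp : 1 < p)
    (hpst : θ * p < pst) :
    ∃! T : ℝ, 0 < T ∧
      IsMaxOn (fun t : ℝ => a / p * S * t ^ p + b / (θ * p) * S ^ θ * t ^ (θ * p)
        - 1 / pst * t ^ pst) (Set.Ici (0 : ℝ)) T := by
  have hp₀ : 0 < p := one_pos.trans hp
  have hH : (fun t : ℝ => a / p * S * t ^ p + b / (θ * p) * S ^ θ * t ^ (θ * p)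
      - 1 / pst * t ^ pst) = fiberingMap (a * S) (b * S ^ θ) p (θ * p) pst := by
    funext t
    simp only [fiberingMap]
    ring
  rw [hH]
  exact existsUnique_pos_isMaxOn_fiberingMap (mul_pos ha hS).le (by positivity) hp₀
    (lt_mul_of_one_lt_left hp₀ hθ) hpst
end

section
/- Let $a, b, S > 0$, $\theta > 1$, $1 < p$, $p^* > \theta p$. Define $\hat{H}(t) = aS + bS^\theta t^{(\theta-1)p} - t^{p^*-p}$ for $t > 0$. Then there exists a unique $\hat{T} > 0$ such that $\hat{H}(t) > 0$ for $t \in (0, \hat{T})$ and $\hat{H}(t) < 0$ for $t \in (\hat{T}, \infty)$. -/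
/-!
Dividing by `t ^ ((θ - 1) * p)` turns `Ĥ` into `a S t ^ (-(θ - 1) p) + b S ^ θ - t ^ (p^* - θ p)`,
which is strictly decreasing on `(0, ∞)`, tends to `+∞` at `0⁺` and to `-∞` at `+∞`. It therefore
has exactly one zero, and `Ĥ` has the same sign as it.
-/

open Set Filter Topology

def SignChangesAt (f : ℝ → ℝ) (T : ℝ) : Prop :=
  0 < T ∧ (∀ t, 0 < t → t < T → 0 < f t) ∧ (∀ t, T < t → f t < 0)

namespace SignChangesAt

variable {f g w : ℝ → ℝ} {T T' : ℝ}

theorem unique (h : SignChangesAt f T) (h' : SignChangesAt f T') : T = T' := by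
  by_contra hne
  wlog hlt : T < T' generalizing T T'
  · exact this h' h (Ne.symm hne) ((not_lt.mp hlt).lt_of_ne (Ne.symm hne))
  have hmid_pos : 0 < f ((T + T') / 2) := h'.2.1 _ (by linarith [h.1]) (by linarith)
  have hmid_neg : f ((T + T') / 2) < 0 := h.2.2 _ (by linarith)
  linarith

theorem of_eq_mul (hg : SignChangesAt g T) (hw : ∀ t, 0 < t → 0 < w t)
    (hf : ∀ t, 0 < t → f t = w t * g t) : SignChangesAt f T := by
  obtain ⟨hT, hpos, hneg⟩ := hg
  refine ⟨hT, fun t ht htT => ?_, fun t hTt => ?_⟩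
  · rw [hf t ht]
    exact mul_pos (hw t ht) (hpos t ht htT)
  · have ht : 0 < t := hT.trans hTt
    rw [hf t ht]
    exact mul_neg_of_pos_of_neg (hw t ht) (hneg t hTt)

end SignChangesAt

theorem StrictAntiOn.signChangesAt {g : ℝ → ℝ} {T : ℝ} (hg : StrictAntiOn g (Ioi 0))
    (hT : 0 < T) (hgT : g T = 0) : SignChangesAt g T :=
  ⟨hT, fun _ ht htT => hgT ▸ hg ht hT htT,
    fun t hTt => hgT ▸ hg hT (hT.trans hTt : 0 < t) hTt⟩

theorem ContinuousOn.exists_pos_eq_zero {g : ℝ → ℝ} (hc : ContinuousOn g (Ioi 0))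
    (h₀ : ∀ᶠ t in 𝓝[>] 0, 0 < g t) (h_top : ∀ᶠ t in atTop, g t < 0) :
    ∃ T, 0 < T ∧ g T = 0 := by
  obtain ⟨t₀, hgt₀, ht₀⟩ := (h₀.and self_mem_nhdsWithin).exists
  obtain ⟨t₁, ht₁, hgt₁⟩ := ((eventually_gt_atTop 0).and h_top).exists
  have hsub : uIcc t₀ t₁ ⊆ Ioi 0 := fun t ht =>
    lt_of_lt_of_le (lt_min ht₀ ht₁) ht.1
  obtain ⟨T, hT, hgT⟩ :=
    intermediate_value_uIcc (hc.mono hsub) (show (0 : ℝ) ∈ uIcc (g t₀) (g t₁) from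
      mem_uIcc.mpr (Or.inr ⟨hgt₁.le, hgt₀.le⟩))
  exact ⟨T, hsub hT, hgT⟩

theorem add_mul_rpow_sub_rpow_eq {t : ℝ} (ht : 0 < t) (A C α β : ℝ) :
    A + C * t ^ α - t ^ β = t ^ α * (A * t ^ (-α) + C - t ^ (β - α)) := by
  have hneg : t ^ α * t ^ (-α) = 1 := by rw [← Real.rpow_add ht, add_neg_cancel, Real.rpow_zero]
  have hsub : t ^ α * t ^ (β - α) = t ^ β := by rw [← Real.rpow_add ht, add_sub_cancel]
  linear_combination hsub - A * hneg

section PowerFunction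

variable {A C α γ : ℝ}

theorem strictAntiOn_mul_rpow_neg_add_sub_rpow (hA : 0 < A) (hα : 0 < α) (hγ : 0 < γ) :
    StrictAntiOn (fun t => A * t ^ (-α) + C - t ^ γ) (Ioi 0) := by
  intro s hs t _ hst
  have h₁ : t ^ (-α) < s ^ (-α) := Real.rpow_lt_rpow_of_neg hs hst (neg_lt_zero.mpr hα)
  have h₂ : s ^ γ < t ^ γ := Real.rpow_lt_rpow (le_of_lt hs) hst hγ
  have := mul_lt_mul_of_pos_left h₁ hA
  simp only
  linarith

theorem continuousOn_mul_rpow_neg_add_sub_rpow :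
    ContinuousOn (fun t => A * t ^ (-α) + C - t ^ γ) (Ioi 0) := by
  refine ((continuousOn_const.mul ?_).add continuousOn_const).sub ?_ <;>
    exact continuousOn_id.rpow_const fun t ht => Or.inl (ne_of_gt ht)

theorem tendsto_mul_rpow_neg_add_sub_rpow_nhdsGT_zero (hA : 0 < A) (hα : 0 < α) (hγ : 0 < γ) :
    Tendsto (fun t => A * t ^ (-α) + C - t ^ γ) (𝓝[>] 0) atTop := by
  have h_pow : Tendsto (fun t : ℝ => t ^ γ) (𝓝[>] 0) (𝓝 0) := by
    simpa [Real.zero_rpow hγ.ne'] using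
      ((Real.continuousAt_rpow_const 0 γ (Or.inr hγ.le)).tendsto).mono_left nhdsWithin_le_nhds
  exact (((tendsto_rpow_neg_nhdsGT_zero (neg_lt_zero.mpr hα)).const_mul_atTop hA).atTop_add
    tendsto_const_nhds).atTop_add h_pow.neg

theorem tendsto_mul_rpow_neg_add_sub_rpow_atTop (hα : 0 < α) (hγ : 0 < γ) :
    Tendsto (fun t => A * t ^ (-α) + C - t ^ γ) atTop atBot := by
  have h_bdd : Tendsto (fun t : ℝ => A * t ^ (-α) + C) atTop (𝓝 (A * 0 + C)) :=
    ((tendsto_rpow_neg_atTop hα).const_mul A).add_const C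
  simpa only [sub_eq_add_neg, Function.comp_def] using
    h_bdd.add_atBot (tendsto_neg_atTop_atBot.comp (tendsto_rpow_atTop hγ))

end PowerFunction

theorem unique_sign_change_general (a b S θ p pst : ℝ)
    (ha : 0 < a) (hS : 0 < S) (hθ : 1 < θ) (hp : 1 < p)
    (hpst : θ * p < pst) :
    ∃! T : ℝ, 0 < T ∧
      (∀ t : ℝ, 0 < t → t < T → 0 < a * S + b * S ^ θ * t ^ ((θ - 1) * p) - t ^ (pst - p)) ∧
      (∀ t : ℝ, T < t → a * S + b * S ^ θ * t ^ ((θ - 1) * p) - t ^ (pst - p) < 0) := by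
  have hA : 0 < a * S := mul_pos ha hS
  have hα : 0 < (θ - 1) * p := mul_pos (by linarith) (by linarith)
  have hγ : 0 < pst - p - (θ - 1) * p := by linarith
  obtain ⟨T, hT, hgT⟩ := continuousOn_mul_rpow_neg_add_sub_rpow.exists_pos_eq_zero
    ((tendsto_mul_rpow_neg_add_sub_rpow_nhdsGT_zero hA hα hγ).eventually_gt_atTop 0)
    ((tendsto_mul_rpow_neg_add_sub_rpow_atTop hα hγ).eventually_lt_atBot 0)
  have hsign : SignChangesAt (fun t => a * S + b * S ^ θ * t ^ ((θ - 1) * p) - t ^ (pst - p)) T :=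
    ((strictAntiOn_mul_rpow_neg_add_sub_rpow hA hα hγ).signChangesAt hT hgT).of_eq_mul
      (fun t ht => Real.rpow_pos_of_pos ht _)
      (fun t ht => add_mul_rpow_sub_rpow_eq ht _ _ _ _)
  exact ⟨T, hsign, fun _ hT' => SignChangesAt.unique hT' hsign⟩

theorem unique_sign_change (a b S θ p pst : ℝ)
    (ha : 0 < a) (hb : 0 < b) (hS : 0 < S) (hθ : 1 < θ) (hp : 1 < p)
    (hpst : θ * p < pst) :
    ∃! T : ℝ, 0 < T ∧
      (∀ t : ℝ, 0 < t → t < T → 0 < a * S + b * S ^ θ * t ^ ((θ - 1) * p) - t ^ (pst - p)) ∧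
      (∀ t : ℝ, T < t → a * S + b * S ^ θ * t ^ ((θ - 1) * p) - t ^ (pst - p) < 0) :=
  unique_sign_change_general a b S θ p pst ha hS hθ hp hpst
end

section
/- For all real numbers $x, y$ and $p > 1$, one has $|x-y|^{p-2}(x-y)(x^- - y^-) \ge |x^- - y^-|^p$, where $t^- = \min\{t, 0\}$. -/
/-!
The map `t ↦ min t 0` is monotone and `1`-Lipschitz, so `a = x - y` and `b = x⁻ - y⁻` satisfy
`0 ≤ a * b` and `|b| ≤ |a|`; hence `|a| ^ (p - 2) * a * b = |a| ^ (p - 1) * |b| ≥ |b| ^ p`.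
-/

lemma Monotone.sub_mul_sub_nonneg {α : Type*} [Ring α] [LinearOrder α] [IsStrictOrderedRing α]
    {f : α → α} (hf : Monotone f) (x y : α) : 0 ≤ (x - y) * (f x - f y) := by
  rcases le_total y x with h | h
  · exact mul_nonneg (sub_nonneg.mpr h) (sub_nonneg.mpr (hf h))
  · exact mul_nonneg_of_nonpos_of_nonpos (sub_nonpos.mpr h) (sub_nonpos.mpr (hf h))

lemma abs_min_sub_min_le_abs_sub {α : Type*} [AddCommGroup α] [LinearOrder α]
    [IsOrderedAddMonoid α] (x y c : α) : |min x c - min y c| ≤ |x - y| := by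
  simpa using abs_min_sub_min_le_max x c y c

lemma Real.abs_rpow_le_abs_rpow_sub_two_mul_mul {p a b : ℝ} (hp : 1 < p) (hab : 0 ≤ a * b)
    (hba : |b| ≤ |a|) : |b| ^ p ≤ |a| ^ (p - 2) * a * b := by
  have hsplit : ∀ t : ℝ, 0 ≤ t → ∀ q : ℝ, q + 1 ≠ 0 → t ^ (q + 1) = t ^ q * t := fun t ht q hq ↦ by
    rw [Real.rpow_add' ht hq, Real.rpow_one]
  calc |b| ^ p = |b| ^ (p - 1) * |b| := by
        rw [← hsplit _ (abs_nonneg b) _ (by linarith), sub_add_cancel]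
    _ ≤ |a| ^ (p - 1) * |b| := by
        gcongr
    _ = |a| ^ (p - 2) * |a| * |b| := by
        rw [← hsplit _ (abs_nonneg a) _ (by linarith)]
        ring_nf
    _ = |a| ^ (p - 2) * a * b := by
        rw [mul_assoc, ← abs_mul, abs_of_nonneg hab, mul_assoc]

theorem signed_power_neg_part (p : ℝ) (hp : 1 < p) (x y : ℝ) :
    |min x 0 - min y 0| ^ p ≤ |x - y| ^ (p - 2) * (x - y) * (min x 0 - min y 0) :=
  Real.abs_rpow_le_abs_rpow_sub_two_mul_mul hp
    ((monotone_id.min monotone_const).sub_mul_sub_nonneg x y) (abs_min_sub_min_le_abs_sub x y 0)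
end

section
/- Let $p > 1$, let $\gamma : \mathbb{R} \to \mathbb{R}$ be a nondecreasing $C^1$ function, and define $\Gamma(t) = \int_0^t (\gamma'(\tau))^{1/p}\,d\tau$. Then for all real numbers $a, b$, $|a - b|^{p-2}(a-b)(\gamma(a) - \gamma(b)) \ge |\Gamma(a) - \Gamma(b)|^p$. -/
/-!
Write `Γ(t) = ∫₀ᵗ φ` with `φ = (γ')^(1/p)`, so that `φ ^ p = γ'` (here `γ' ≥ 0` because `γ` is
monotone). For `b ≤ a`, Jensen's inequality for the convex function `x ↦ x ^ p` and the average
of `φ` over `[b, a]` gives `(Γ(a) - Γ(b)) ^ p ≤ (a - b) ^ (p - 1) ∫_b^a γ'`, and the last integral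
is `γ(a) - γ(b)` by the fundamental theorem of calculus. Both sides of the inequality are
symmetric in `a` and `b`.
-/

open MeasureTheory Set intervalIntegral

theorem rpow_setIntegral_le_measureReal_rpow_mul {α : Type*} [MeasurableSpace α]
    {μ : Measure α} {s : Set α} (hμs₀ : μ s ≠ 0) (hμs : μ s ≠ ⊤) {p : ℝ} (hp : 1 ≤ p)
    {f : α → ℝ} (hf₀ : ∀ᵐ x ∂μ.restrict s, 0 ≤ f x) (hf : IntegrableOn f s μ)
    (hfp : IntegrableOn (fun x ↦ f x ^ p) s μ) :
    (∫ x in s, f x ∂μ) ^ p ≤ μ.real s ^ (p - 1) * ∫ x in s, f x ^ p ∂μ := by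
  have hjensen := (convexOn_rpow hp).map_set_average_le
    (continuousOn_id.rpow_const fun _ _ ↦ Or.inr (by linarith)) isClosed_Ici hμs₀ hμs hf₀ hf hfp
  have hm : 0 < μ.real s := ENNReal.toReal_pos hμs₀ hμs
  have hI : 0 ≤ ∫ x in s, f x ∂μ := integral_nonneg_of_ae hf₀
  rw [setAverage_eq, setAverage_eq, smul_eq_mul, smul_eq_mul,
    Real.mul_rpow (inv_nonneg.2 hm.le) hI, Real.inv_rpow hm.le] at hjensen
  calc (∫ x in s, f x ∂μ) ^ p
      = μ.real s ^ p * ((μ.real s ^ p)⁻¹ * (∫ x in s, f x ∂μ) ^ p) := by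
        rw [mul_inv_cancel_left₀ (Real.rpow_pos_of_pos hm p).ne']
    _ ≤ μ.real s ^ p * ((μ.real s)⁻¹ * ∫ x in s, f x ^ p ∂μ) := 
        mul_le_mul_of_nonneg_left hjensen (by positivity)
    _ = μ.real s ^ (p - 1) * ∫ x in s, f x ^ p ∂μ := by
        rw [Real.rpow_sub_one hm.ne', ← mul_assoc, div_eq_mul_inv]

theorem intervalIntegral_rpow_le_sub_rpow_mul {f : ℝ → ℝ} {a b p : ℝ} (hp : 1 ≤ p) (hab : a ≤ b)
    (hf : ContinuousOn f (Icc a b)) (hf₀ : ∀ x ∈ Icc a b, 0 ≤ f x) :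
    (∫ x in a..b, f x) ^ p ≤ (b - a) ^ (p - 1) * ∫ x in a..b, f x ^ p := by
  rcases hab.eq_or_lt with rfl | hlt
  · simp [Real.zero_rpow (by linarith : p ≠ 0)]
  have hfp : ContinuousOn (fun x ↦ f x ^ p) (Icc a b) :=
    hf.rpow_const fun _ _ ↦ Or.inr (by linarith)
  have hvol : volume.real (Ioc a b) = b - a := by simp [hab]
  rw [integral_of_le hab, integral_of_le hab, ← hvol]
  refine rpow_setIntegral_le_measureReal_rpow_mul (by simp [hlt]) measure_Ioc_lt_top.ne hp
    ((ae_restrict_iff' measurableSet_Ioc).2 (.of_forall fun x hx ↦ hf₀ x (Ioc_subset_Icc_self hx)))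
    (hf.integrableOn_Icc.mono_set Ioc_subset_Icc_self)
    (hfp.integrableOn_Icc.mono_set Ioc_subset_Icc_self)

theorem jensen_truncation_inequality (p : ℝ) (hp : 1 < p)
    (γ : ℝ → ℝ) (hmono : Monotone γ) (hsmooth : ContDiff ℝ 1 γ) (a b : ℝ) :
    |(∫ τ in (0:ℝ)..a, (deriv γ τ) ^ (1 / p)) - ∫ τ in (0:ℝ)..b, (deriv γ τ) ^ (1 / p)| ^ p
      ≤ |a - b| ^ (p - 2) * (a - b) * (γ a - γ b) := by
  wlog hba : b ≤ a generalizing a b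
  · rw [abs_sub_comm]
    calc _ ≤ |b - a| ^ (p - 2) * (b - a) * (γ b - γ a) := this b a (le_of_not_ge hba)
      _ = |a - b| ^ (p - 2) * (a - b) * (γ a - γ b) := by rw [abs_sub_comm]; ring
  have hγ' : Continuous (deriv γ) := hsmooth.continuous_deriv le_rfl
  have hφ : Continuous fun τ ↦ deriv γ τ ^ (1 / p) :=
    hγ'.rpow_const fun _ ↦ Or.inr (by positivity)
  have hφ₀ (τ : ℝ) : 0 ≤ deriv γ τ ^ (1 / p) := Real.rpow_nonneg hmono.deriv_nonneg _
  have hφp (τ : ℝ) : (deriv γ τ ^ (1 / p)) ^ p = deriv γ τ := by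
    rw [← Real.rpow_mul hmono.deriv_nonneg, one_div_mul_cancel (by positivity), Real.rpow_one]
  rw [integral_interval_sub_left (hφ.intervalIntegrable 0 a) (hφ.intervalIntegrable 0 b),
    abs_of_nonneg (integral_nonneg hba fun τ _ ↦ hφ₀ τ), abs_of_nonneg (sub_nonneg.2 hba)]
  calc _ ≤ (a - b) ^ (p - 1) * ∫ τ in b..a, (deriv γ τ ^ (1 / p)) ^ p :=
        intervalIntegral_rpow_le_sub_rpow_mul hp.le hba hφ.continuousOn fun τ _ ↦ hφ₀ τ
    _ = (a - b) ^ (p - 1) * (γ a - γ b) := by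
        simp only [hφp]
        rw [integral_deriv_eq_sub (fun x _ ↦ hsmooth.differentiable one_ne_zero x)
          (hγ'.intervalIntegrable b a)]
    _ = (a - b) ^ (p - 2) * (a - b) * (γ a - γ b) := by
        rw [← Real.rpow_add_one' (sub_nonneg.2 hba) (by linarith)]
        ring_nf
end
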